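/- arXiv:1605.02858 — 2 statements merged into one kernel-verified Lean document; each statement's English description precedes it below -/
import Mathlib

section
/- There exist a neighborhood U of 0 in ℂ and a constant C > 0 such that for all z ∈ U, |φ₁(z) − (1 + z/6)/(1 − z/3)| ≤ C|z|³. -/
/-!
Dividing the Taylor expansion of `exp` by `z` gives `φ₁(z) = 1 + z/2 + z²/6 + O(z³)`, while
`(1 + z/6)/(1 - z/3) = 1 + z/2 + z²/6 + z³/(18 - 6z)`, whose last term is `O(z³)` because
`18 - 6z` stays away from `0` near the origin.
-/

noncomputable def phi1 (z : ℂ) : ℂ := if z = 0 then 1 else (Complex.exp z - 1) / z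

open Asymptotics Filter Topology Finset Nat

-- At `z = 0` both sides vanish, the right one because `0⁻¹ = 0`.
theorem phi1_sub_sum_range_eq (n : ℕ) (z : ℂ) :
    phi1 z - ∑ m ∈ range (n + 1), z ^ m / (m + 1)! =
      (Complex.exp z - ∑ m ∈ range (n + 2), z ^ m / m !) * z⁻¹ := by
  rcases eq_or_ne z 0 with rfl | hz
  · simp [phi1, sum_range_succ']
  · have hshift : ∑ m ∈ range (n + 1), z ^ (m + 1) / (m + 1)! =
        z * ∑ m ∈ range (n + 1), z ^ m / (m + 1)! := by
      rw [mul_sum]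
      congr! 1 with m
      ring
    rw [sum_range_succ' _ (n + 1), hshift, phi1, if_neg hz]
    field_simp
    ring

theorem phi1_sub_sum_range_isBigO_pow (n : ℕ) :
    (fun z ↦ phi1 z - ∑ m ∈ range (n + 1), z ^ m / (m + 1)!) =O[𝓝 0] (· ^ (n + 1)) := by
  refine ((Complex.exp_sub_sum_range_isBigO_pow (n + 2)).mul (isBigO_refl (·⁻¹) _)).congr
    (fun z ↦ (phi1_sub_sum_range_eq n z).symm) fun z ↦ ?_
  rcases eq_or_ne z 0 with rfl | hz
  · simp
  · rw [pow_succ _ (n + 1), mul_inv_cancel_right₀ hz]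

theorem pade12_sub_taylor_eq {z : ℂ} (hz : 18 - 6 * z ≠ 0) :
    (1 + z / 6) / (1 - z / 3) - (1 + z / 2 + z ^ 2 / 6) = z ^ 3 * (18 - 6 * z)⁻¹ := by
  have hz' : 1 - z / 3 ≠ 0 := by
    contrapose! hz
    linear_combination 18 * hz
  rw [← div_eq_mul_inv, div_sub' hz', div_eq_div_iff hz' hz]
  ring

theorem pade12_sub_taylor_isBigO :
    (fun z : ℂ ↦ (1 + z / 6) / (1 - z / 3) - (1 + z / 2 + z ^ 2 / 6)) =O[𝓝 0] (· ^ 3) := by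
  have hcont : ContinuousAt (fun z : ℂ ↦ 18 - 6 * z) 0 := by fun_prop
  have hne : (fun z : ℂ ↦ 18 - 6 * z) 0 ≠ 0 := by norm_num
  refine ((isBigO_refl (· ^ 3) _).mul ((hcont.inv₀ hne).tendsto.isBigO_one ℂ)).congr'
    ?_ (by simp)
  filter_upwards [hcont.eventually_ne hne] with z hz
  exact (pade12_sub_taylor_eq hz).symm

theorem phi1_pade_order3 :
    ∃ U ∈ nhds (0 : ℂ), ∃ C : ℝ, 0 < C ∧
      ∀ z ∈ U, ‖phi1 z - (1 + z / 6) / (1 - z / 3)‖ ≤ C * ‖z‖ ^ 3 := by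
  have htaylor (z : ℂ) : ∑ m ∈ range 3, z ^ m / (m + 1)! = 1 + z / 2 + z ^ 2 / 6 := by
    norm_num [sum_range_succ, factorial]
  have hbigO : (fun z ↦ phi1 z - (1 + z / 6) / (1 - z / 3)) =O[𝓝 0] (· ^ 3) :=
    ((phi1_sub_sum_range_isBigO_pow 2).sub pade12_sub_taylor_isBigO).congr_left
      fun z ↦ by rw [htaylor]; ring
  obtain ⟨C, hC, U, hU, hbound⟩ := hbigO.exists_mem_basis (𝓝 (0 : ℂ)).basis_sets
  exact ⟨U, hU, C, hC, fun z hz ↦ by simpa only [norm_pow] using hbound z hz⟩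
end

section
/- Let J and L be n×n complex matrices with J = L + B. Then φ₂(hJ) − φ₂(hL) = h ∫₀¹∫₀¹ e^{(1−s)(1−θ)hL} θ(1−θ) B e^{s(1−θ)hJ} ds dθ for all h > 0, where φ₂(z) = ∫₀¹ e^{(1−θ)z} θ dθ (matrix version). -/
/-!
Both sides are integrals over `θ`, so it suffices to compare integrands. For fixed `θ` the
difference `exp (a • J) - exp (a • L)`, with `a = (1 - θ) h`, is given by Duhamel's formula: the
derivative of `s ↦ exp ((1 - s) a • L) * exp (s a • J)` is `a • exp ((1 - s) a • L) * B * exp (s a • J)`,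
and integrating it over `[0, 1]` yields that difference.
-/

open NormedSpace

/-- `φ₂(A) = ∫₀¹ θ e^{(1-θ)A} dθ` for an operator `A`. -/
noncomputable def phi2Op {n : ℕ}
    (A : EuclideanSpace ℂ (Fin n) →L[ℂ] EuclideanSpace ℂ (Fin n)) :
    EuclideanSpace ℂ (Fin n) →L[ℂ] EuclideanSpace ℂ (Fin n) :=
  ∫ θ in (0:ℝ)..1, θ • exp ((1 - θ) • A)

section Duhamel

variable {𝔸 : Type*} [NormedRing 𝔸] [NormedAlgebra ℝ 𝔸] [CompleteSpace 𝔸]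

theorem hasDerivAt_exp_smul_mul_exp_smul (X Y : 𝔸) (a s : ℝ) :
    HasDerivAt (fun s : ℝ => exp (((1 - s) * a) • Y) * exp ((s * a) • X))
      (a • (exp (((1 - s) * a) • Y) * (X - Y) * exp ((s * a) • X))) s := by
  have hY : HasDerivAt (fun s : ℝ => exp (((1 - s) * a) • Y))
      ((-a) • (exp (((1 - s) * a) • Y) * Y)) s :=
    (hasDerivAt_exp_smul_const Y ((1 - s) * a)).scomp (h := fun s => (1 - s) * a) s
      (by simpa using ((hasDerivAt_id s).const_sub 1).mul_const a)
  have hX : HasDerivAt (fun s : ℝ => exp ((s * a) • X)) (a • (X * exp ((s * a) • X))) s :=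
    (hasDerivAt_exp_smul_const' X (s * a)).scomp (h := fun s => s * a) s
      (by simpa using (hasDerivAt_id s).mul_const a)
  refine (hY.mul hX).congr_deriv ?_
  simp only [mul_sub, sub_mul, smul_sub, neg_smul, neg_mul, smul_mul_assoc, mul_smul_comm, mul_assoc]
  abel

@[fun_prop]
theorem Continuous.exp_smul {f : ℝ → ℝ} (hf : Continuous f) (X : 𝔸) :
    Continuous fun t => exp (f t • X) :=
  (continuous_iff_continuousAt.2 fun t => (hasDerivAt_exp_smul_const X t).continuousAt).comp hf

/-- Duhamel's formula. -/
theorem exp_smul_sub_exp_smul (X Y : 𝔸) (a : ℝ) :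
    exp (a • X) - exp (a • Y) =
      a • ∫ s in (0:ℝ)..1, exp (((1 - s) * a) • Y) * (X - Y) * exp ((s * a) • X) := by
  rw [← intervalIntegral.integral_smul,
    intervalIntegral.integral_eq_sub_of_hasDerivAt
      (fun s _ => hasDerivAt_exp_smul_mul_exp_smul X Y a s)
      ((by fun_prop : Continuous fun s : ℝ =>
        a • (exp (((1 - s) * a) • Y) * (X - Y) * exp ((s * a) • X))).intervalIntegrable 0 1)]
  simp

end Duhamel

theorem phi2_difference_formula_general (n : ℕ)
    (J L B : EuclideanSpace ℂ (Fin n) →L[ℂ] EuclideanSpace ℂ (Fin n))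
    (hJ : J = L + B) (h : ℝ) :
    phi2Op (h • J) - phi2Op (h • L) =
      h • ∫ θ in (0:ℝ)..1, ∫ s in (0:ℝ)..1,
        (θ * (1 - θ)) •
          (exp (((1 - s) * (1 - θ) * h) • L) * B * exp ((s * (1 - θ) * h) • J)) := by
  have hB : J - L = B := by rw [hJ, add_sub_cancel_left]
  have integrand (θ : ℝ) :
      θ • (exp ((1 - θ) • h • J) - exp ((1 - θ) • h • L)) =
        h • ∫ s in (0:ℝ)..1, (θ * (1 - θ)) •
          (exp (((1 - s) * (1 - θ) * h) • L) * B * exp ((s * (1 - θ) * h) • J)) := by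
    rw [smul_smul, smul_smul, exp_smul_sub_exp_smul J L, hB,
      intervalIntegral.integral_smul, smul_smul, smul_smul]
    simp only [mul_assoc]
    congr 1
    ring
  have integrable (A : EuclideanSpace ℂ (Fin n) →L[ℂ] EuclideanSpace ℂ (Fin n)) :
      IntervalIntegrable (fun θ : ℝ => θ • exp ((1 - θ) • A)) MeasureTheory.volume 0 1 :=
    (continuous_id.smul ((continuous_const.sub continuous_id).exp_smul A)).intervalIntegrable 0 1
  rw [phi2Op, phi2Op, ← intervalIntegral.integral_sub (integrable _) (integrable _),
    ← intervalIntegral.integral_smul]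
  exact intervalIntegral.integral_congr fun θ _ => by rw [← integrand, smul_sub]

theorem phi2_difference_formula (n : ℕ)
    (J L B : EuclideanSpace ℂ (Fin n) →L[ℂ] EuclideanSpace ℂ (Fin n))
    (hJ : J = L + B) (h : ℝ) (hh : 0 < h) :
    phi2Op (h • J) - phi2Op (h • L) =
      h • ∫ θ in (0:ℝ)..1, ∫ s in (0:ℝ)..1,
        (θ * (1 - θ)) •
          (exp (((1 - s) * (1 - θ) * h) • L) * B * exp ((s * (1 - θ) * h) • J)) :=
  phi2_difference_formula_general n J L B hJ h
end
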